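/- Error estimate for the time-marching iteration: suppose F is concave, let c > 0, let u be the solution of the QVI with switching cost c, and let (u^n)_{n≥0} be the time-marching sequence for switching cost c with pseudo-time parameter ε > 0. Then for any κ ∈ (0, c) and every n ≥ 0 (with the convention 0^0 = 1), 0 ≤ u − u^n ≤ L_κ(1 − μ)^n/μ componentwise, where L_κ = (2‖F(0)‖ + κ)/γ and μ = κ/(κ + εL_κ). -/

import Mathlib

open Filter Topology

noncomputable section

/-- A monotone system with constant `γ`: whenever `u i l - v i l` is the (nonnegative)
maximum of all differences, `F u i l - F v i l ≥ γ (u i l - v i l)`. -/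
def IsMonotoneSystem {N d : ℕ} (γ : ℝ)
    (F : (Fin d → Fin N → ℝ) → Fin d → Fin N → ℝ) : Prop :=
  ∀ u v : Fin d → Fin N → ℝ, ∀ i : Fin d, ∀ l : Fin N,
    (∀ (j : Fin d) (k : Fin N), u j k - v j k ≤ u i l - v i l) →
    0 ≤ u i l - v i l →
    γ * (u i l - v i l) ≤ F u i l - F v i l

/-- The intervention operator `(M_i u)_l = max_{j ≠ i} (u j l - c)`. -/
def Mop {N d : ℕ} (c : ℝ) (u : Fin d → Fin N → ℝ) (i : Fin d) (l : Fin N) : ℝ :=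
  ⨆ j : {j : Fin d // j ≠ i}, (u j l - c)

/-- The sup-norm `‖u‖ = max_{i,l} |u i l|`. -/
def supNorm {N d : ℕ} (u : Fin d → Fin N → ℝ) : ℝ :=
  ⨆ p : Fin d × Fin N, |u p.1 p.2|

/-- A penalty function: continuous, non-decreasing, vanishing on `(-∞,0]` and
positive on `(0,∞)`. -/
def IsPenaltyFunction (π : ℝ → ℝ) : Prop :=
  Continuous π ∧ Monotone π ∧ (∀ y : ℝ, y ≤ 0 → π y = 0) ∧ (∀ y : ℝ, 0 < y → 0 < π y)

/-- A concave system: each `F_i` is concave (componentwise). -/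
def IsConcaveSystem {N d : ℕ}
    (F : (Fin d → Fin N → ℝ) → Fin d → Fin N → ℝ) : Prop :=
  ∀ (i : Fin d) (u v : Fin d → Fin N → ℝ) (θ : ℝ), 0 ≤ θ → θ ≤ 1 → ∀ l : Fin N,
    θ * F u i l + (1 - θ) * F v i l ≤ F (fun j k => θ * u j k + (1 - θ) * v j k) i l


/-!
At a point where `w - v` attains a positive maximum, monotonicity gives `F w > F v` and the
obstacle parts satisfy `w - M w ≥ v - M v`; this yields comparison principles for the QVI and
for the implicit step. Hence `u ∈ [-a, a]` with `a = ‖F(0)‖/γ`, and `U n ≤ u`. For the lower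
bound, `U (n + 1)` is compared with the barrier `u - T_{n+1} (1 - Q (a + u))`, where
`T_n = L (1 - μ)^n / μ` and `Q = κ / (L c)`. It is an extrapolation `(1 + η) u - η a - s` of `u`
away from the constant supersolution `a`: where `F u = 0`, concavity and the shift `s ≥ 0` give
`F ≤ 0`; where a switch is active, the extrapolation widens the switching gap by `η c`, which
absorbs the pseudo-time increment. The identity `ε μ L = κ (1 - μ)` defining `μ` makes this fit
at every step.
-/

section

variable {N d : ℕ}

theorem le_of_forall_max_sub_nonpos {w v : Fin d → Fin N → ℝ}
    (h : ∀ i l, (∀ j k, w j k - v j k ≤ w i l - v i l) → w i l - v i l ≤ 0) (i : Fin d)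
    (l : Fin N) : w i l ≤ v i l := by
  have : Nonempty (Fin d × Fin N) := ⟨(i, l)⟩
  obtain ⟨⟨i₀, l₀⟩, hmax⟩ := Finite.exists_max fun p : Fin d × Fin N => w p.1 p.2 - v p.1 p.2
  linarith [h i₀ l₀ fun j k => hmax (j, k), hmax (i, l)]

theorem abs_le_supNorm (w : Fin d → Fin N → ℝ) (i : Fin d) (l : Fin N) : |w i l| ≤ supNorm w :=
  le_ciSup (f := fun p : Fin d × Fin N => |w p.1 p.2|) (Set.finite_range _).bddAbove (i, l)

theorem supNorm_nonneg (w : Fin d → Fin N → ℝ) : 0 ≤ supNorm w :=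
  Real.iSup_nonneg fun _ => abs_nonneg _

theorem le_Mop (c : ℝ) (w : Fin d → Fin N → ℝ) {i j : Fin d} (l : Fin N) (hj : j ≠ i) :
    w j l - c ≤ Mop c w i l :=
  le_ciSup (f := fun j : {j : Fin d // j ≠ i} => w j l - c) (Set.finite_range _).bddAbove ⟨j, hj⟩

theorem exists_ne_Mop_le (hd : 2 ≤ d) (c : ℝ) (w : Fin d → Fin N → ℝ) (i : Fin d) (l : Fin N) :
    ∃ j ≠ i, Mop c w i l ≤ w j l - c := by
  have := Fin.nontrivial_iff_two_le.2 hd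
  have := nonempty_subtype.2 (exists_ne i)
  obtain ⟨j, hj⟩ := Finite.exists_max fun j : {j : Fin d // j ≠ i} => w j l - c
  exact ⟨j, j.2, ciSup_le hj⟩

theorem Mop_le_Mop_add (hd : 2 ≤ d) {c δ : ℝ} {w v : Fin d → Fin N → ℝ} {i : Fin d} {l : Fin N}
    (h : ∀ j, w j l - v j l ≤ δ) : Mop c w i l ≤ Mop c v i l + δ := by
  obtain ⟨j, hj, hMj⟩ := exists_ne_Mop_le hd c w i l
  linarith [h j, le_Mop c v l hj]

end

namespace IsMonotoneSystem

variable {N d : ℕ} {γ : ℝ} {F : (Fin d → Fin N → ℝ) → Fin d → Fin N → ℝ}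

theorem apply_sub_const_add_le (hF : IsMonotoneSystem γ F) (w : Fin d → Fin N → ℝ) {t : ℝ}
    (ht : 0 ≤ t) (i : Fin d) (l : Fin N) : F (fun j k => w j k - t) i l + γ * t ≤ F w i l := by
  have h := hF w (fun j k => w j k - t) i l (fun j k => by simp) (by simpa using ht)
  simp only [sub_sub_cancel] at h
  linarith

theorem le_of_apply_le (hF : IsMonotoneSystem γ F) (hγ : 0 < γ) {w v : Fin d → Fin N → ℝ}
    (h : ∀ i l, F w i l ≤ F v i l) : ∀ i l, w i l ≤ v i l :=
  le_of_forall_max_sub_nonpos fun i l hmax => by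
    by_contra! hpos
    nlinarith [hF w v i l hmax hpos.le, h i l, mul_pos hγ hpos]

theorem apply_const_nonneg (hF : IsMonotoneSystem γ F) (hγ : 0 < γ) (i : Fin d) (l : Fin N) :
    0 ≤ F (fun _ _ => supNorm (F 0) / γ) i l := by
  have h := hF.apply_sub_const_add_le (fun _ _ => supNorm (F 0) / γ)
    (div_nonneg (supNorm_nonneg (F 0)) hγ.le) i l
  simp only [sub_self, mul_div_cancel₀ _ hγ.ne'] at h
  rw [show (fun _ _ => (0 : ℝ)) = (0 : Fin d → Fin N → ℝ) from rfl] at h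
  linarith [(abs_le.1 (abs_le_supNorm (F 0) i l)).1]

theorem apply_neg_const_nonpos (hF : IsMonotoneSystem γ F) (hγ : 0 < γ) (i : Fin d) (l : Fin N) :
    F (fun _ _ => -(supNorm (F 0) / γ)) i l ≤ 0 := by
  have h := hF.apply_sub_const_add_le 0 (div_nonneg (supNorm_nonneg (F 0)) hγ.le) i l
  simp only [Pi.zero_apply, zero_sub, mul_div_cancel₀ _ hγ.ne'] at h
  linarith [(abs_le.1 (abs_le_supNorm (F 0) i l)).2]

theorem neg_le_of_apply_nonneg (hF : IsMonotoneSystem γ F) (hγ : 0 < γ)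
    {w : Fin d → Fin N → ℝ} (hw : ∀ i l, 0 ≤ F w i l) :
    ∀ i l, -(supNorm (F 0) / γ) ≤ w i l :=
  hF.le_of_apply_le hγ fun i l => (hF.apply_neg_const_nonpos hγ i l).trans (hw i l)

end IsMonotoneSystem

def geomBound (L μ : ℝ) (n : ℕ) : ℝ := L * (1 - μ) ^ n / μ

theorem geomBound_nonneg {L μ : ℝ} (hL : 0 ≤ L) (hμ0 : 0 ≤ μ) (hμ1 : μ ≤ 1) (n : ℕ) :
    0 ≤ geomBound L μ n :=
  div_nonneg (mul_nonneg hL (pow_nonneg (sub_nonneg.2 hμ1) n)) hμ0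

theorem geomBound_succ (L μ : ℝ) (n : ℕ) : geomBound L μ (n + 1) = (1 - μ) * geomBound L μ n := by
  simp only [geomBound, pow_succ]
  ring

theorem mul_geomBound_zero (L : ℝ) {μ : ℝ} (hμ : μ ≠ 0) : μ * geomBound L μ 0 = L := by
  simp only [geomBound, pow_zero, mul_one]
  exact mul_div_cancel₀ L hμ


theorem IsConcaveSystem.apply_extrapolate_nonpos {N d : ℕ}
    {F : (Fin d → Fin N → ℝ) → Fin d → Fin N → ℝ} (hF : IsConcaveSystem F)
    {u b : Fin d → Fin N → ℝ} {η : ℝ} (hη : 0 ≤ η) {i : Fin d} {l : Fin N}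
    (hu : F u i l ≤ 0) (hb : 0 ≤ F b i l) :
    F (fun j k => (1 + η) * u j k - η * b j k) i l ≤ 0 := by
  have hθ : 0 < (1 + η)⁻¹ := by positivity
  have h := hF i (fun j k => (1 + η) * u j k - η * b j k) b (1 + η)⁻¹ hθ.le
    (inv_le_one_of_one_le₀ (by linarith)) l
  have hu_eq : (fun j k => (1 + η)⁻¹ * ((1 + η) * u j k - η * b j k) + (1 - (1 + η)⁻¹) * b j k)
      = u := by
    funext j k
    field_simp
    ring
  rw [hu_eq] at h
  have hθ1 : 0 ≤ 1 - (1 + η)⁻¹ := sub_nonneg.2 (inv_le_one_of_one_le₀ (by linarith))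
  have : (1 + η)⁻¹ * F (fun j k => (1 + η) * u j k - η * b j k) i l ≤ 0 := by
    nlinarith [mul_nonneg hθ1 hb]
  exact nonpos_of_mul_nonpos_right this hθ

section QVI

variable {N d : ℕ} {γ c ε : ℝ} {F : (Fin d → Fin N → ℝ) → Fin d → Fin N → ℝ}

def IsQVISolution (F : (Fin d → Fin N → ℝ) → Fin d → Fin N → ℝ) (c : ℝ)
    (u : Fin d → Fin N → ℝ) : Prop :=
  ∀ i l, min (F u i l) (u i l - Mop c u i l) = 0

def stepResidual (F : (Fin d → Fin N → ℝ) → Fin d → Fin N → ℝ) (c ε : ℝ)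
    (p w : Fin d → Fin N → ℝ) (i : Fin d) (l : Fin N) : ℝ :=
  min (F w i l) (w i l - Mop c w i l + ε * (w i l - p i l))

def IsTimeMarching (F : (Fin d → Fin N → ℝ) → Fin d → Fin N → ℝ) (c ε : ℝ)
    (U : ℕ → Fin d → Fin N → ℝ) : Prop :=
  (∀ i l, F (U 0) i l = 0) ∧ ∀ m i l, stepResidual F c ε (U m) (U (m + 1)) i l = 0

theorem IsQVISolution.apply_nonneg {u : Fin d → Fin N → ℝ} (hu : IsQVISolution F c u)
    (i : Fin d) (l : Fin N) : 0 ≤ F u i l :=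
  (le_min_iff.1 (hu i l).ge).1

theorem IsQVISolution.stepResidual_self {u : Fin d → Fin N → ℝ} (hu : IsQVISolution F c u)
    (ε : ℝ) (i : Fin d) (l : Fin N) : stepResidual F c ε u u i l = 0 := by
  simpa [stepResidual] using hu i l

theorem stepResidual_comparison (hF : IsMonotoneSystem γ F) (hγ : 0 < γ) (hd : 2 ≤ d)
    (hε : 0 < ε) {p q w v : Fin d → Fin N → ℝ} (hpq : ∀ i l, p i l ≤ q i l)
    (hw : ∀ i l, stepResidual F c ε p w i l ≤ 0) (hv : ∀ i l, 0 ≤ stepResidual F c ε q v i l) :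
    ∀ i l, w i l ≤ v i l :=
  le_of_forall_max_sub_nonpos fun i l hmax => by
    by_contra! hpos
    obtain ⟨hFv, hv_obst⟩ := le_min_iff.1 (hv i l)
    have hM : Mop c w i l ≤ Mop c v i l + (w i l - v i l) := Mop_le_Mop_add hd fun j => hmax j l
    rcases min_le_iff.1 (hw i l) with hFw | hw_obst
    · nlinarith [hF w v i l hmax hpos.le, mul_pos hγ hpos]
    · nlinarith [mul_pos hε hpos, mul_le_mul_of_nonneg_left (hpq i l) hε.le]

theorem IsQVISolution.le_supNorm_div {u : Fin d → Fin N → ℝ} (hu : IsQVISolution F c u)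
    (hF : IsMonotoneSystem γ F) (hγ : 0 < γ) (hd : 2 ≤ d) (hc : 0 < c) :
    ∀ i l, u i l ≤ supNorm (F 0) / γ :=
  le_of_forall_max_sub_nonpos (v := fun _ _ => supNorm (F 0) / γ) fun i l hmax => by
    by_contra! hpos
    obtain ⟨j, hj, hMj⟩ := exists_ne_Mop_le hd c u i l
    have hFu : F u i l ≤ 0 := by
      refine (min_le_iff.1 (hu i l).le).resolve_right fun h => ?_
      linarith [hmax j l]
    nlinarith [hF u _ i l hmax hpos.le, hF.apply_const_nonneg hγ i l, mul_pos hγ hpos]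

theorem IsQVISolution.stepResidual_extrapolate_nonpos {u : Fin d → Fin N → ℝ}
    (hu : IsQVISolution F c u) (hFm : IsMonotoneSystem γ F) (hγ : 0 ≤ γ)
    (hFc : IsConcaveSystem F) (hd : 2 ≤ d) {a η s : ℝ}
    (ha : ∀ i l, 0 ≤ F (fun _ _ => a) i l) (hη : 0 ≤ η) (hs : 0 ≤ s)
    {p : Fin d → Fin N → ℝ} (hp : ∀ i l, ε * ((1 + η) * u i l - η * a - s - p i l) ≤ η * c) :
    ∀ i l, stepResidual F c ε p (fun j k => (1 + η) * u j k - η * a - s) i l ≤ 0 := by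
  intro i l
  rcases min_le_iff.1 (hu i l).le with hFu | hu_obst
  · refine min_le_of_left_le ?_
    have hext := hFc.apply_extrapolate_nonpos hη hFu (ha i l)
    have hshift := hFm.apply_sub_const_add_le (fun j k => (1 + η) * u j k - η * a) hs i l
    nlinarith [mul_nonneg hγ hs]
  · refine min_le_of_right_le ?_
    obtain ⟨j, hj, hMj⟩ := exists_ne_Mop_le hd c u i l
    have := le_Mop c (fun j k => (1 + η) * u j k - η * a - s) l hj
    nlinarith [hp i l, mul_le_mul_of_nonneg_left (show u i l + c ≤ u j l by linarith) hη]

theorem IsTimeMarching.le_solution {U : ℕ → Fin d → Fin N → ℝ} (hU : IsTimeMarching F c ε U)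
    (hF : IsMonotoneSystem γ F) (hγ : 0 < γ) (hd : 2 ≤ d) (hε : 0 < ε)
    {u : Fin d → Fin N → ℝ} (hu : IsQVISolution F c u) : ∀ n i l, U n i l ≤ u i l
  | 0 => hF.le_of_apply_le hγ fun i l => (hU.1 i l).trans_le (hu.apply_nonneg i l)
  | n + 1 => stepResidual_comparison hF hγ hd hε (hU.le_solution hF hγ hd hε hu n)
      (fun i l => (hU.2 n i l).le) (fun i l => (hu.stepResidual_self ε i l).ge)

theorem IsTimeMarching.barrier_le_succ {U : ℕ → Fin d → Fin N → ℝ}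
    (hU : IsTimeMarching F c ε U) (hFm : IsMonotoneSystem γ F) (hγ : 0 < γ)
    (hFc : IsConcaveSystem F) (hd : 2 ≤ d) (hε : 0 < ε) {u : Fin d → Fin N → ℝ}
    (hu : IsQVISolution F c u) {a Q t : ℝ} (ha : ∀ i l, 0 ≤ F (fun _ _ => a) i l)
    (hQ : 0 ≤ Q) (haQ : 2 * a * Q ≤ 1) (ht : 0 ≤ t) {m : ℕ} {p : Fin d → Fin N → ℝ}
    (hpU : ∀ i l, p i l ≤ U m i l)
    (hp : ∀ i l, ε * (u i l - t * (1 - Q * (a + u i l)) - p i l) ≤ Q * t * c) :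
    ∀ i l, u i l - t * (1 - Q * (a + u i l)) ≤ U (m + 1) i l := by
  have hsub := hu.stepResidual_extrapolate_nonpos hFm hγ.le hFc hd ha (mul_nonneg hQ ht)
    (mul_nonneg ht (by linarith)) (s := t * (1 - 2 * a * Q)) (p := p)
    fun i l => by convert hp i l using 2; ring
  have hψ : (fun j k => (1 + Q * t) * u j k - Q * t * a - t * (1 - 2 * a * Q))
      = fun j k => u j k - t * (1 - Q * (a + u j k)) := by
    funext j k
    ring
  rw [hψ] at hsub
  exact stepResidual_comparison hFm hγ hd hε hpU hsub fun i l => (hU.2 m i l).ge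

theorem IsTimeMarching.barrier_le {U : ℕ → Fin d → Fin N → ℝ}
    (hU : IsTimeMarching F c ε U) (hFm : IsMonotoneSystem γ F) (hγ : 0 < γ)
    (hFc : IsConcaveSystem F) (hd : 2 ≤ d) (hε : 0 < ε) {u : Fin d → Fin N → ℝ}
    (hu : IsQVISolution F c u) {a Q μ : ℝ} {T : ℕ → ℝ} (ha : ∀ i l, 0 ≤ F (fun _ _ => a) i l)
    (hU0 : ∀ i l, -a ≤ U 0 i l) (hula : ∀ i l, -a ≤ u i l) (hua : ∀ i l, u i l ≤ a)
    (hQ : 0 ≤ Q) (haQ : 2 * a * Q ≤ 1) (hT : ∀ n, 0 ≤ T n) (hμ : 0 ≤ μ)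
    (hT_succ : ∀ n, T (n + 1) = (1 - μ) * T n)
    (hrate : ∀ n, ε * (μ * T n) ≤ Q * T (n + 1) * c) (hT0 : 2 * a ≤ μ * T 0) :
    ∀ n i l, u i l - T (n + 1) * (1 - Q * (a + u i l)) ≤ U (n + 1) i l := by
  have hweight_nonneg : ∀ i l, 0 ≤ 1 - Q * (a + u i l) := fun i l => by
    nlinarith [mul_le_mul_of_nonneg_left (show a + u i l ≤ 2 * a by linarith [hua i l]) hQ]
  have hweight_le_one : ∀ i l, 1 - Q * (a + u i l) ≤ 1 := fun i l => by
    nlinarith [mul_nonneg hQ (show 0 ≤ a + u i l by linarith [hula i l])]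
  have hstep : ∀ n {p : Fin d → Fin N → ℝ}, (∀ i l, p i l ≤ U n i l) →
      (∀ i l, u i l - T (n + 1) * (1 - Q * (a + u i l)) - p i l ≤ μ * T n) →
      ∀ i l, u i l - T (n + 1) * (1 - Q * (a + u i l)) ≤ U (n + 1) i l :=
    fun n p hpU hp => hU.barrier_le_succ hFm hγ hFc hd hε hu ha hQ haQ (hT (n + 1)) hpU
      fun i l => (mul_le_mul_of_nonneg_left (hp i l) hε.le).trans (hrate n)
  intro n
  induction n with
  | zero =>
    exact hstep 0 hU0 fun i l => by nlinarith [mul_nonneg (hT 1) (hweight_nonneg i l), hua i l]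
  | succ n ih =>
    refine hstep (n + 1) ih fun i l => ?_
    rw [hT_succ (n + 1)]
    nlinarith [mul_nonneg (mul_nonneg hμ (hT (n + 1))) (sub_nonneg.2 (hweight_le_one i l))]

theorem IsTimeMarching.sub_le_geomBound {U : ℕ → Fin d → Fin N → ℝ}
    (hU : IsTimeMarching F c ε U) (hFm : IsMonotoneSystem γ F) (hγ : 0 < γ)
    (hFc : IsConcaveSystem F) (hd : 2 ≤ d) (hε : 0 < ε) {u : Fin d → Fin N → ℝ}
    (hu : IsQVISolution F c u) {κ L : ℝ} (hκ : 0 < κ) (hκc : κ ≤ c) (hL : 0 < L)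
    (haL : 2 * (supNorm (F 0) / γ) ≤ L) (n : ℕ) (i : Fin d) (l : Fin N) :
    u i l - U n i l ≤ geomBound L (κ / (κ + ε * L)) n := by
  set a := supNorm (F 0) / γ
  set μ := κ / (κ + ε * L) with hμ_def
  have hc : 0 < c := hκ.trans_le hκc
  have hden : 0 < κ + ε * L := by positivity
  have hμ0 : 0 < μ := div_pos hκ hden
  have hμ1 : μ ≤ 1 := (div_le_one hden).2 (by nlinarith [mul_pos hε hL])
  have hT := geomBound_nonneg hL.le hμ0.le hμ1
  have hua := hu.le_supNorm_div hFm hγ hd hc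
  have hula := hFm.neg_le_of_apply_nonneg hγ hu.apply_nonneg
  have hU0 := hFm.neg_le_of_apply_nonneg hγ fun i l => (hU.1 i l).ge
  have hrate : ∀ n, ε * (μ * geomBound L μ n) ≤ κ / (L * c) * geomBound L μ (n + 1) * c := by
    intro n
    have hεμ : ε * μ * L = κ * (1 - μ) := by
      rw [hμ_def]
      field_simp
      ring
    rw [geomBound_succ]
    field_simp
    linear_combination geomBound L μ n * hεμ
  have haQ : 2 * a * (κ / (L * c)) ≤ 1 := by
    rw [← mul_div_assoc, div_le_one (by positivity)]
    nlinarith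
  have hbarrier := hU.barrier_le hFm hγ hFc hd hε hu (hFm.apply_const_nonneg hγ) hU0 hula hua
    (by positivity) haQ hT hμ0.le (geomBound_succ L μ) hrate
    ((mul_geomBound_zero L hμ0.ne').symm ▸ haL)
  cases n with
  | zero =>
    have := mul_geomBound_zero L hμ0.ne'
    nlinarith [hua i l, hU0 i l, mul_le_of_le_one_left (hT 0) hμ1]
  | succ n =>
    have hQ : 0 ≤ κ / (L * c) := by positivity
    nlinarith [hbarrier n i l,
      mul_nonneg (hT (n + 1)) (mul_nonneg hQ (show 0 ≤ a + u i l by linarith [hula i l]))]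

end QVI

theorem time_marching_error_general {N d : ℕ} (hd : 2 ≤ d)
    (γ : ℝ) (hγ : 0 < γ)
    (F : (Fin d → Fin N → ℝ) → Fin d → Fin N → ℝ)
    (hFmono : IsMonotoneSystem γ F)
    (hFconc : IsConcaveSystem F)
    (c : ℝ) (ε : ℝ) (hε : 0 < ε)
    (u : Fin d → Fin N → ℝ)
    (hu : ∀ i l, min (F u i l) (u i l - Mop c u i l) = 0)
    (U : ℕ → Fin d → Fin N → ℝ)
    (hU0 : ∀ i l, F (U 0) i l = 0)
    (hUn : ∀ m : ℕ, ∀ i l,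
      min (F (U (m + 1)) i l)
        (U (m + 1) i l - Mop c (U (m + 1)) i l + ε * (U (m + 1) i l - U m i l)) = 0)
    (κ : ℝ) (hκ0 : 0 < κ) (hκc : κ < c) :
    ∀ n : ℕ, ∀ i l,
      0 ≤ u i l - U n i l ∧
      u i l - U n i l ≤
        (2 * supNorm (F 0) + κ) / γ *
          (1 - κ / (κ + ε * ((2 * supNorm (F 0) + κ) / γ))) ^ n /
          (κ / (κ + ε * ((2 * supNorm (F 0) + κ) / γ))) := by
  have hU : IsTimeMarching F c ε U := ⟨hU0, hUn⟩
  have hL : 0 < (2 * supNorm (F 0) + κ) / γ :=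
    div_pos (by linarith [supNorm_nonneg (F 0)]) hγ
  have haL : 2 * (supNorm (F 0) / γ) ≤ (2 * supNorm (F 0) + κ) / γ := by
    rw [← mul_div_assoc]
    exact div_le_div_of_nonneg_right (by linarith) hγ.le
  intro n i l
  exact ⟨sub_nonneg.2 (hU.le_solution hFmono hγ hd hε hu n i l),
    hU.sub_le_geomBound hFmono hγ hFconc hd hε hu hκ0 hκc.le hL haL n i l⟩

/-- Error estimate for the time-marching iteration with pseudo-time parameter `ε`. -/
theorem time_marching_error {N d : ℕ} (hN : 1 ≤ N) (hd : 2 ≤ d)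
    (γ : ℝ) (hγ : 0 < γ)
    (F : (Fin d → Fin N → ℝ) → Fin d → Fin N → ℝ)
    (hFcont : Continuous F) (hFmono : IsMonotoneSystem γ F)
    (hFconc : IsConcaveSystem F)
    (c : ℝ) (hc : 0 < c) (ε : ℝ) (hε : 0 < ε)
    (u : Fin d → Fin N → ℝ)
    (hu : ∀ i l, min (F u i l) (u i l - Mop c u i l) = 0)
    (U : ℕ → Fin d → Fin N → ℝ)
    (hU0 : ∀ i l, F (U 0) i l = 0)
    (hUn : ∀ m : ℕ, ∀ i l,
      min (F (U (m + 1)) i l)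
        (U (m + 1) i l - Mop c (U (m + 1)) i l + ε * (U (m + 1) i l - U m i l)) = 0)
    (κ : ℝ) (hκ0 : 0 < κ) (hκc : κ < c) :
    ∀ n : ℕ, ∀ i l,
      0 ≤ u i l - U n i l ∧
      u i l - U n i l ≤
        (2 * supNorm (F 0) + κ) / γ *
          (1 - κ / (κ + ε * ((2 * supNorm (F 0) + κ) / γ))) ^ n /
          (κ / (κ + ε * ((2 * supNorm (F 0) + κ) / γ))) :=
  time_marching_error_general hd γ hγ F hFmono hFconc c ε hε u hu U hU0 hUn κ hκ0 hκc
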